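/- arXiv:0710.4596 — 2 statements merged into one kernel-verified Lean document; each statement's English description precedes it below -/
import Mathlib

section
/- For every lattice point a ∈ ℤ³ (viewed in ℝ³) and every permutation (i,j,k) of (1,2,3), the three slant triangles T(a;i,j), T(a+eᵢ;j,k) and T(a−e_k;k,i) have the same image under π, i.e. π(T(a;i,j)) = π(T(a+eᵢ;j,k)) = π(T(a−e_k;k,i)), and their gradients {i,j}, {j,k}, {k,i} are pairwise distinct (they exhaust all three 2-element subsets of {1,2,3}). -/
noncomputable section

/-- Ambient space ℝ³. -/
abbrev E3 := EuclideanSpace ℝ (Fin 3)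

/-- Standard basis vector eᵢ of ℝ³. -/
def ee3 (i : Fin 3) : E3 := EuclideanSpace.single i 1

/-- 𝟙 = e₁ + e₂ + e₃. -/
def ones3 : E3 := ∑ i, ee3 i

/-- Orthogonal projection π onto the hyperplane H = {v ∈ ℝ³ : v₁+v₂+v₃ = 0},
    given by π(v) = v − ((v₁+v₂+v₃)/3)·𝟙. -/
def proj3 (v : E3) : E3 := v - ((∑ i, v i) / 3) • ones3

/-- A lattice point of ℤ³ viewed in ℝ³. -/
def toE3 (a : Fin 3 → ℤ) : E3 := WithLp.toLp 2 (fun n => (a n : ℝ))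

/-- Slant triangle T(a;i,j) = conv{a, a+eᵢ, a+eᵢ+eⱼ}. -/
def slant3 (a : Fin 3 → ℤ) (i j : Fin 3) : Set E3 :=
  convexHull ℝ {toE3 a, toE3 a + ee3 i, toE3 a + ee3 i + ee3 j}

/-- Flat triangle: the image π(T(a;i,j)). -/
def flat3 (a : Fin 3 → ℤ) (i j : Fin 3) : Set E3 := proj3 '' slant3 a i j

/-!
Since π is linear, π(T(a;i,j)) is the convex hull of the projected vertices, and π kills 𝟙.
For a permutation (i,j,k) we have eᵢ + eⱼ + eₖ = 𝟙, so the extra vertex a + eᵢ + eⱼ + eₖ of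
T(a+eᵢ;j,k) projects to π(a), and the extra vertex a − eₖ of T(a−eₖ;k,i) projects to
π(a + eᵢ + eⱼ): the three triangles have the same projected vertices.
The 2-subsets of {1,2,3} are exactly the complements of singletons, and {i,j}, {j,k}, {k,i}
are the complements of k, i, j.
-/

open Finset

lemma ones3_apply (n : Fin 3) : ones3 n = 1 := by
  simp [ones3, ee3]

lemma proj3_isLinearMap : IsLinearMap ℝ proj3 where
  map_add v w := by
    ext n
    simp only [proj3, PiLp.add_apply, PiLp.sub_apply, PiLp.smul_apply, smul_eq_mul,
      Finset.sum_add_distrib]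
    ring
  map_smul c v := by
    ext n
    simp only [proj3, PiLp.sub_apply, PiLp.smul_apply, smul_eq_mul, ← Finset.mul_sum]
    ring

lemma proj3_ones3 : proj3 ones3 = 0 := by
  ext n
  simp [proj3, ones3_apply]

lemma proj3_add_ones3 (v : E3) : proj3 (v + ones3) = proj3 v := by
  rw [proj3_isLinearMap.map_add, proj3_ones3, add_zero]

lemma toE3_add (a b : Fin 3 → ℤ) : toE3 (a + b) = toE3 a + toE3 b := by
  ext n
  simp [toE3]

lemma toE3_sub (a b : Fin 3 → ℤ) : toE3 (a - b) = toE3 a - toE3 b := by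
  ext n
  simp [toE3]

lemma toE3_single_one (i : Fin 3) : toE3 (Pi.single i 1) = ee3 i := by
  ext n
  by_cases h : n = i <;> simp [toE3, ee3, h]

lemma univ_fin_three_eq {i j k : Fin 3} (hij : i ≠ j) (hjk : j ≠ k) (hik : i ≠ k) :
    (univ : Finset (Fin 3)) = {i, j, k} :=
  (eq_univ_of_card _ (card_eq_three.2 ⟨i, j, k, hij, hik, hjk, rfl⟩)).symm

lemma ee3_add_add_eq_ones3 {i j k : Fin 3} (hij : i ≠ j) (hjk : j ≠ k) (hik : i ≠ k) :
    ee3 i + ee3 j + ee3 k = ones3 := by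
  rw [ones3, univ_fin_three_eq hij hjk hik, sum_insert (by simp [hij, hik]),
    sum_pair hjk, add_assoc]

lemma pair_eq_univ_erase {i j k : Fin 3} (hij : i ≠ j) (hjk : j ≠ k) (hik : i ≠ k) :
    ({i, j} : Finset (Fin 3)) = univ.erase k := by
  rw [univ_fin_three_eq hij hjk hik, erase_insert_of_ne hik, erase_insert_of_ne hjk,
    erase_singleton, insert_empty]

lemma setOf_card_eq_card_sub_one {α : Type*} [Fintype α] [DecidableEq α] [Nonempty α] :
    {s : Finset α | #s = Fintype.card α - 1} = Set.range (univ : Finset α).erase := by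
  ext s
  constructor
  · intro hs
    have hcompl : #sᶜ = 1 := by
      have := Fintype.card_pos (α := α)
      rw [card_compl, hs]
      omega
    obtain ⟨m, hm⟩ := card_eq_one.1 hcompl
    exact ⟨m, by rw [← compl_singleton, ← hm, compl_compl]⟩
  · rintro ⟨m, rfl⟩
    exact card_erase_of_mem (mem_univ m)

lemma flat3_eq_convexHull (a : Fin 3 → ℤ) (i j : Fin 3) :
    flat3 a i j = convexHull ℝ
      {proj3 (toE3 a), proj3 (toE3 a + ee3 i), proj3 (toE3 a + ee3 i + ee3 j)} := by
  rw [flat3, slant3, proj3_isLinearMap.image_convexHull, Set.image_insert_eq, Set.image_pair]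

lemma flat3_eq_flat3_add_single (a : Fin 3 → ℤ) {i j k : Fin 3}
    (hij : i ≠ j) (hjk : j ≠ k) (hik : i ≠ k) :
    flat3 a i j = flat3 (a + Pi.single i 1) j k := by
  have hproj : proj3 (toE3 a + ee3 i + ee3 j + ee3 k) = proj3 (toE3 a) := by
    rw [← proj3_add_ones3 (toE3 a), ← ee3_add_add_eq_ones3 hij hjk hik]
    abel_nf
  rw [flat3_eq_convexHull, flat3_eq_convexHull, toE3_add, toE3_single_one, hproj,
    Set.insert_comm, Set.pair_comm]

lemma flat3_eq_flat3_sub_single (a : Fin 3 → ℤ) {i j k : Fin 3}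
    (hij : i ≠ j) (hjk : j ≠ k) (hik : i ≠ k) :
    flat3 a i j = flat3 (a - Pi.single k 1) k i := by
  have hproj : proj3 (toE3 a - ee3 k) = proj3 (toE3 a + ee3 i + ee3 j) := by
    rw [← proj3_add_ones3 (toE3 a - ee3 k), ← ee3_add_add_eq_ones3 hij hjk hik]
    abel_nf
  rw [flat3_eq_convexHull, flat3_eq_convexHull, toE3_sub, toE3_single_one, hproj,
    sub_add_cancel, Set.pair_comm, Set.insert_comm]

lemma gradients_ne_and_exhaust {i j k : Fin 3} (hij : i ≠ j) (hjk : j ≠ k) (hik : i ≠ k) :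
    ({i, j} : Finset (Fin 3)) ≠ {j, k} ∧ ({j, k} : Finset (Fin 3)) ≠ {k, i} ∧
    ({i, j} : Finset (Fin 3)) ≠ {k, i} ∧
    ({({i, j} : Finset (Fin 3)), {j, k}, {k, i}} : Set (Finset (Fin 3))) =
      {s : Finset (Fin 3) | #s = 2} := by
  rw [pair_eq_univ_erase hij hjk hik, pair_eq_univ_erase hjk hik.symm hij.symm,
    pair_eq_univ_erase hik.symm hij hjk.symm]
  simp only [ne_eq, erase_inj _ (mem_univ _)]
  refine ⟨hik.symm, hij, hjk.symm, ?_⟩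
  have huniv : (Set.univ : Set (Fin 3)) = {k, i, j} := by
    rw [← coe_univ, univ_fin_three_eq hik.symm hij hjk.symm, coe_insert, coe_pair]
  rw [show {s : Finset (Fin 3) | #s = 2} = {s | #s = Fintype.card (Fin 3) - 1} from rfl,
    setOf_card_eq_card_sub_one, ← Set.image_univ, huniv, Set.image_insert_eq, Set.image_pair]

/-- the three slant triangles T(a;i,j), T(a+eᵢ;j,k), T(a−e_k;k,i)
have the same image under π, and their gradients {i,j}, {j,k}, {k,i} are pairwise
distinct, exhausting all three 2-element subsets of {1,2,3}. -/
theorem stmt0 (a : Fin 3 → ℤ) (i j k : Fin 3)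
    (hij : i ≠ j) (hjk : j ≠ k) (hik : i ≠ k) :
    flat3 a i j = flat3 (a + Pi.single i 1) j k ∧
    flat3 a i j = flat3 (a - Pi.single k 1) k i ∧
    ({i, j} : Finset (Fin 3)) ≠ {j, k} ∧
    ({j, k} : Finset (Fin 3)) ≠ {k, i} ∧
    ({i, j} : Finset (Fin 3)) ≠ {k, i} ∧
    ({({i, j} : Finset (Fin 3)), {j, k}, {k, i}} : Set (Finset (Fin 3))) =
      {s : Finset (Fin 3) | s.card = 2} :=
  ⟨flat3_eq_flat3_add_single a hij hjk hik, flat3_eq_flat3_sub_single a hij hjk hik,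
    gradients_ne_and_exhaust hij hjk hik⟩
end
end

section
/- Consecutive flat triangles of a local trajectory share an edge (downward step): for every a ∈ ℤ³ and distinct i,j ∈ {1,2,3}, the intersection π(T(a;i,j)) ∩ π(T(a+eᵢ;j,i)) equals the projected segment π([a+eᵢ, a+eᵢ+eⱼ]), i.e. the image under π of the convex hull of {a+eᵢ, a+eᵢ+eⱼ}. -/
/-!
Let `k` be the third index. The functional `f w = wᵢ - w_k` vanishes on `𝟙`, so it factors
through `π`. It is constant, equal to `f a + 1`, on the common edge `[a + eᵢ, a + eᵢ + eⱼ]`, and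
smaller, resp. larger, at the remaining vertices `a` and `a + 2eᵢ + eⱼ`. Two points of the two
triangles with the same projection thus have the same `f`-value, which must be `f a + 1`, and on
the lower triangle this value is attained only on the edge.
-/

noncomputable section

open Set

section ConvexHullCut

variable {𝕜 E : Type*} [Field 𝕜] [LinearOrder 𝕜] [IsStrictOrderedRing 𝕜]
  [AddCommGroup E] [Module 𝕜 E]

theorem convexHull_insert_inter_halfSpace_subset {f : E →ₗ[𝕜] 𝕜} {p : E} {s : Set E} {m : 𝕜}
    (hp : f p < m) (hs : ∀ q ∈ s, f q ≤ m) :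
    convexHull 𝕜 (insert p s) ∩ {x | m ≤ f x} ⊆ convexHull 𝕜 s := by
  rintro x ⟨hx, hmx⟩
  rcases s.eq_empty_or_nonempty with rfl | hne
  · rw [insert_empty_eq, convexHull_singleton, mem_singleton_iff] at hx
    subst hx
    exact absurd hmx (not_le.2 hp)
  rw [convexHull_insert hne, mem_convexJoin] at hx
  obtain ⟨_, rfl, y, hy, a, b, ha, hb, hab, rfl⟩ := hx
  have hfy : f y ≤ m := convexHull_min hs (convex_halfSpace_le f.isLinear m) hy
  obtain rfl : b = 1 - a := eq_sub_of_add_eq' hab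
  simp only [mem_ofPred_eq, map_add, map_smul, smul_eq_mul] at hmx
  obtain rfl : a = 0 := by nlinarith
  simpa using hy

theorem image_convexHull_insert_inter_image_convexHull_insert {F : Type*} {π : E → F}
    {f : E →ₗ[𝕜] 𝕜} {p p' : E} {s : Set E} {m : 𝕜} (hπ : ∀ x y, π x = π y → f x = f y)
    (hp : f p < m) (hp' : m ≤ f p') (hs : ∀ q ∈ s, f q = m) :
    π '' convexHull 𝕜 (insert p s) ∩ π '' convexHull 𝕜 (insert p' s) = π '' convexHull 𝕜 s := by
  refine subset_antisymm ?_ ?_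
  · rintro _ ⟨⟨x, hx, rfl⟩, x', hx', hxx'⟩
    have hmx' : m ≤ f x' := convexHull_min (t := {w | m ≤ f w})
      (insert_subset hp' fun q hq => (hs q hq).ge) (convex_halfSpace_ge f.isLinear m) hx'
    have hmx : m ≤ f x := hmx'.trans_eq (hπ x' x hxx')
    exact ⟨x, convexHull_insert_inter_halfSpace_subset hp (fun q hq => (hs q hq).le) ⟨hx, hmx⟩,
      rfl⟩
  · exact subset_inter (image_mono (convexHull_mono (subset_insert _ _)))
      (image_mono (convexHull_mono (subset_insert _ _)))

end ConvexHullCut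

lemma ee3_apply (i n : Fin 3) : ee3 i n = if n = i then 1 else 0 := by
  simp [ee3, PiLp.single_apply]

lemma proj3_apply_sub_apply (v : E3) (i k : Fin 3) : proj3 v i - proj3 v k = v i - v k := by
  simp only [proj3, ones3, ee3_apply, PiLp.sub_apply, PiLp.smul_apply, smul_eq_mul,
    WithLp.ofLp_sum, Finset.sum_apply, Finset.sum_ite_eq, Finset.mem_univ, if_true]
  ring

lemma toE3_add_single (a : Fin 3 → ℤ) (i : Fin 3) :
    toE3 (a + Pi.single i 1) = toE3 a + ee3 i := by
  ext n
  rcases eq_or_ne n i with rfl | h <;> simp [toE3, ee3_apply, Pi.single_apply, *]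

lemma slant3_add_single (a : Fin 3 → ℤ) (i j : Fin 3) :
    slant3 (a + Pi.single i 1) j i = convexHull ℝ
      (insert (toE3 a + ee3 i + ee3 j + ee3 i) {toE3 a + ee3 i, toE3 a + ee3 i + ee3 j}) := by
  rw [slant3, toE3_add_single, pair_comm, insert_comm]

/-- π(T(a;i,j)) ∩ π(T(a+eᵢ;j,i)) equals the projected segment
π([a+eᵢ, a+eᵢ+eⱼ]). -/
theorem stmt5 (a : Fin 3 → ℤ) (i j : Fin 3) (hij : i ≠ j) :
    flat3 a i j ∩ flat3 (a + Pi.single i 1) j i =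
      proj3 '' convexHull ℝ {toE3 a + ee3 i, toE3 a + ee3 i + ee3 j} := by
  obtain ⟨k, hki, hkj⟩ : ∃ k : Fin 3, k ≠ i ∧ k ≠ j := by revert i j; decide
  let f : E3 →ₗ[ℝ] ℝ := (EuclideanSpace.proj i - EuclideanSpace.proj k : E3 →L[ℝ] ℝ)
  have hf (v : E3) : f v = v i - v k := rfl
  have hf_ei : f (ee3 i) = 1 := by simp [hf, ee3_apply, hki]
  have hf_ej : f (ee3 j) = 0 := by simp [hf, ee3_apply, hij, hkj]
  rw [flat3, flat3, slant3_add_single]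
  refine image_convexHull_insert_inter_image_convexHull_insert (m := f (toE3 a) + 1)
    (fun x y hxy => ?_) (lt_add_one _) (by simp [hf_ei, hf_ej]) ?_
  · rw [hf, hf, ← proj3_apply_sub_apply x, hxy, proj3_apply_sub_apply]
  · rintro q (rfl | rfl) <;> simp [hf_ei, hf_ej]
end
end
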